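/- For every integer n ≥ 2, the ladder L_n admits a super edge-antimagic total labeling, i.e. a bijection f : V(L_n) ∪ E(L_n) → {1,...,5n−2} with f(V(L_n))={1,...,2n} such that all edge-weights f(u)+f(v)+f(uv) over edges uv are pairwise distinct. -/

import Mathlib

open Sum

/-- The weight of an edge `e` under a total labeling `f` of the graph `G`:
the label of `e` plus the labels of its two endpoints. -/
noncomputable def edgeWt {V : Type*} (G : SimpleGraph V) (f : V ⊕ G.edgeSet → ℕ)
    (e : G.edgeSet) : ℕ :=
  f (inr e) + ∑ᶠ (v : V) (_ : v ∈ (e : Sym2 V)), f (inl v)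

/-- The weight of a vertex `v` under a total labeling `f` of the graph `G`:
the label of `v` plus the labels of all edges incident with `v`. -/
noncomputable def vertexWt {V : Type*} (G : SimpleGraph V) (f : V ⊕ G.edgeSet → ℕ)
    (v : V) : ℕ :=
  f (inl v) + ∑ᶠ (e : G.edgeSet) (_ : v ∈ (e : Sym2 V)), f (inr e)

/-- The ladder `L_n = P_n × P_2`, with vertices `u_i = inl i` and `v_i = inr i`
(`i` running over `Fin n`), edges `u_i u_{i+1}`, `v_i v_{i+1}` and rungs `u_i v_i`. -/
def ladder (n : ℕ) : SimpleGraph (Fin n ⊕ Fin n) :=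
  SimpleGraph.fromRel (fun a b =>
    (∃ p q : Fin n, (p : ℕ) + 1 = (q : ℕ) ∧ a = inl p ∧ b = inl q) ∨
    (∃ p q : Fin n, (p : ℕ) + 1 = (q : ℕ) ∧ a = inr p ∧ b = inr q) ∨
    (∃ p : Fin n, a = inl p ∧ b = inr p))

/-!
Label the vertices by `1, …, |V|` arbitrarily, then list the edges in nondecreasing order of
the sum of their endpoint labels and give them the labels `|V| + 1, …, |V| + |E|` in that order.
Along this list the edge label increases strictly and the endpoint sum weakly, so the edge weights
are pairwise distinct. Thus every finite graph is super edge-antimagic total, and for `L_n` it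
remains to count `2n` vertices and `3n - 2` edges.
-/

lemma bijOn_val_add_one_of_equiv {α : Type*} {m : ℕ} (ι : α ≃ Fin m) :
    Set.BijOn (fun x => (ι x : ℕ) + 1) Set.univ (Set.Icc 1 m) := by
  refine ⟨fun x _ => ⟨Nat.le_add_left 1 _, (ι x).isLt⟩,
    fun x _ y _ h => ι.injective (Fin.ext (by simpa using h)),
    fun k hk => ⟨ι.symm ⟨k - 1, by grind⟩, trivial, by
      simp only [Equiv.apply_symm_apply]; grind⟩⟩

lemma exists_equiv_fin_monotone {E β : Type*} [Fintype E] [LinearOrder β] (s : E → β) :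
    ∃ ι : E ≃ Fin (Fintype.card E), Monotone (s ∘ ι.symm) :=
  let ε := Fintype.equivFin E
  ⟨((Tuple.sort (s ∘ ε.symm)).trans ε.symm).symm, Tuple.monotone_sort (s ∘ ε.symm)⟩

lemma injective_val_add_of_monotone {E : Type*} {m : ℕ} (ι : E ≃ Fin m) {s : E → ℕ}
    (hs : Monotone (s ∘ ι.symm)) : Function.Injective (fun e => (ι e : ℕ) + s e) := by
  have hmono : StrictMono (fun i : Fin m => (i : ℕ) + s (ι.symm i)) :=
    fun i j hij => Nat.add_lt_add_of_lt_of_le hij (hs hij.le)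
  intro e e' h
  exact ι.injective (hmono.injective (by simpa using h))

def IsSuperEdgeAntimagicTotal {V : Type*} (G : SimpleGraph V) (f : V ⊕ G.edgeSet → ℕ) :
    Prop :=
  Set.BijOn f Set.univ (Set.Icc 1 (Nat.card V + Nat.card G.edgeSet)) ∧
  Set.BijOn (fun v => f (inl v)) Set.univ (Set.Icc 1 (Nat.card V)) ∧
  Function.Injective (edgeWt G f)

theorem SimpleGraph.exists_isSuperEdgeAntimagicTotal {V : Type*} [Finite V] (G : SimpleGraph V) :
    ∃ f, IsSuperEdgeAntimagicTotal G f := by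
  have := Fintype.ofFinite V
  have := Fintype.ofFinite G.edgeSet
  let ιV := Fintype.equivFin V
  let endpointSum : G.edgeSet → ℕ := fun e =>
    ∑ᶠ (v : V) (_ : v ∈ (e : Sym2 V)), ((ιV v : ℕ) + 1)
  obtain ⟨ιE, hιE⟩ := exists_equiv_fin_monotone endpointSum
  let ι := (Equiv.sumCongr ιV ιE).trans finSumFinEquiv
  refine ⟨fun x => (ι x : ℕ) + 1, ?_, ?_, ?_⟩
  · simpa only [Nat.card_eq_fintype_card] using bijOn_val_add_one_of_equiv ι
  · simpa [ι, Nat.card_eq_fintype_card] using bijOn_val_add_one_of_equiv ιV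
  · have hwt : edgeWt G (fun x => (ι x : ℕ) + 1) =
        fun e => Fintype.card V + 1 + ((ιE e : ℕ) + endpointSum e) := by
      funext e
      simp only [edgeWt, ι, endpointSum, Equiv.trans_apply, Equiv.sumCongr_apply, Sum.map_inl,
        Sum.map_inr, finSumFinEquiv_apply_left, finSumFinEquiv_apply_right, Fin.val_castAdd,
        Fin.val_natAdd]
      ring
    rw [hwt]
    exact (add_right_injective _).comp (injective_val_add_of_monotone ιE hιE)

def ladderEdge (m : ℕ) : Fin m ⊕ Fin m ⊕ Fin (m + 1) → Sym2 (Fin (m + 1) ⊕ Fin (m + 1))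
  | inl i => s(inl i.castSucc, inl i.succ)
  | inr (inl i) => s(inr i.castSucc, inr i.succ)
  | inr (inr i) => s(inl i, inr i)

lemma ladderEdge_mem_edgeSet (m : ℕ) (j : Fin m ⊕ Fin m ⊕ Fin (m + 1)) :
    ladderEdge m j ∈ (ladder (m + 1)).edgeSet := by
  rcases j with i | i | i <;>
    simp only [ladderEdge, SimpleGraph.mem_edgeSet, ladder, SimpleGraph.fromRel_adj]
  · exact ⟨by simp [Fin.ext_iff], Or.inl (Or.inl ⟨i.castSucc, i.succ, by simp, rfl, rfl⟩)⟩
  · exact ⟨by simp [Fin.ext_iff],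
      Or.inl (Or.inr (Or.inl ⟨i.castSucc, i.succ, by simp, rfl, rfl⟩))⟩
  · exact ⟨by simp, Or.inl (Or.inr (Or.inr ⟨i, rfl, rfl⟩))⟩

lemma ladderEdge_injective (m : ℕ) : Function.Injective (ladderEdge m) := by
  rintro (i | i | i) (i' | i' | i') h <;>
    simp only [ladderEdge, Sym2.eq_iff] at h <;> simp_all [Fin.ext_iff] <;> omega

lemma mem_range_ladderEdge (m : ℕ) {e : Sym2 (Fin (m + 1) ⊕ Fin (m + 1))}
    (he : e ∈ (ladder (m + 1)).edgeSet) : e ∈ Set.range (ladderEdge m) := by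
  induction e using Sym2.ind with
  | h a b =>
    rw [SimpleGraph.mem_edgeSet, ladder, SimpleGraph.fromRel_adj] at he
    obtain ⟨-, hab | hab⟩ := he <;>
      rcases hab with ⟨p, q, hpq, rfl, rfl⟩ | ⟨p, q, hpq, rfl, rfl⟩ | ⟨p, rfl, rfl⟩
    · exact ⟨inl ⟨p, by omega⟩, by simp [ladderEdge, hpq]⟩
    · exact ⟨inr (inl ⟨p, by omega⟩), by simp [ladderEdge, hpq]⟩
    · exact ⟨inr (inr p), rfl⟩
    · exact ⟨inl ⟨p, by omega⟩, by simp [ladderEdge, Sym2.eq_swap, hpq]⟩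
    · exact ⟨inr (inl ⟨p, by omega⟩), by simp [ladderEdge, Sym2.eq_swap, hpq]⟩
    · exact ⟨inr (inr p), Sym2.eq_swap⟩

lemma card_edgeSet_ladder (n : ℕ) : Nat.card (ladder n).edgeSet = 3 * n - 2 := by
  rcases n with _ | m
  · simp
  · have hbij : Function.Bijective
        (fun j => (⟨ladderEdge m j, ladderEdge_mem_edgeSet m j⟩ : (ladder (m + 1)).edgeSet)) :=
      ⟨fun j j' h => ladderEdge_injective m (congrArg Subtype.val h),
        fun e => by
          obtain ⟨j, hj⟩ := mem_range_ladderEdge m e.2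
          exact ⟨j, Subtype.ext hj⟩⟩
    rw [← Nat.card_eq_of_bijective _ hbij]
    simp only [Nat.card_eq_fintype_card, Fintype.card_sum, Fintype.card_fin]
    omega

theorem ladder_super_EAT (n : ℕ) :
    ∃ f : (Fin n ⊕ Fin n) ⊕ (ladder n).edgeSet → ℕ,
      Set.BijOn f Set.univ (Set.Icc 1 (5 * n - 2)) ∧
      Set.BijOn (fun v => f (inl v)) Set.univ (Set.Icc 1 (2 * n)) ∧
      Function.Injective (edgeWt (ladder n) f) := by
  obtain ⟨f, hf, hV, hwt⟩ := (ladder n).exists_isSuperEdgeAntimagicTotal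
  have hcardV : Nat.card (Fin n ⊕ Fin n) = 2 * n := by simp [two_mul]
  rw [hcardV, card_edgeSet_ladder, show 2 * n + (3 * n - 2) = 5 * n - 2 by omega] at hf
  rw [hcardV] at hV
  exact ⟨f, hf, hV, hwt⟩
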